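/- arXiv:2506.12686 — 2 statements merged into one kernel-verified Lean document; each statement's English description precedes it below -/
import Mathlib

section
/- Let L be a finite set, and for each ℓ ∈ L let x_ℓ ∈ [0,1]. Suppose each ℓ has 3 operation intervals, and for every interval I of every ℓ, the sum of x_{ℓ'} over all ℓ' whose intervals contain the right endpoint of I is at most 1. Define q(ℓ,ℓ') = x_ℓ·x_{ℓ'} and let A(ℓ) be the set of elements intersecting ℓ. Then ∑_{ℓ ∈ L} (q(ℓ,ℓ) + ∑_{ℓ' ∈ A(ℓ)} q(ℓ,ℓ')) ≤ 6 ∑_{ℓ ∈ L} x_ℓ. -/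
open Finset

/-- Two schedule instances overlap if some operation interval of one overlaps
some operation interval of the other on the same machine. -/
def SOverlap {L M : Type*} (lo hi : L → Fin 3 → ℤ) (mach : L → Fin 3 → M)
    (ℓ ℓ' : L) : Prop :=
  ∃ k k', mach ℓ k = mach ℓ' k' ∧ lo ℓ k ≤ hi ℓ' k' ∧ lo ℓ' k' ≤ hi ℓ k

open scoped Classical in
/-- Double-counting bound: under the right-endpoint capacity constraint,
∑_ℓ (q(ℓ,ℓ) + ∑_{ℓ' ∈ A(ℓ)} q(ℓ,ℓ')) ≤ 6 ∑_ℓ x_ℓ. -/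
theorem stmt_5 {L M : Type*} [Fintype L] (lo hi : L → Fin 3 → ℤ)
    (mach : L → Fin 3 → M) (hI : ∀ ℓ k, lo ℓ k ≤ hi ℓ k)
    (x : L → ℝ) (hx0 : ∀ ℓ, 0 ≤ x ℓ) (hx1 : ∀ ℓ, x ℓ ≤ 1)
    (hcap : ∀ ℓ (k : Fin 3),
      ∑ ℓ' ∈ univ.filter (fun ℓ' => ∃ k', mach ℓ' k' = mach ℓ k ∧
        lo ℓ' k' ≤ hi ℓ k ∧ hi ℓ k ≤ hi ℓ' k'), x ℓ' ≤ 1) :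
    ∑ ℓ, (x ℓ * x ℓ +
        ∑ ℓ' ∈ univ.filter (fun ℓ' => ℓ' ≠ ℓ ∧ SOverlap lo hi mach ℓ ℓ'),
          x ℓ * x ℓ') ≤ 6 * ∑ ℓ, x ℓ := by
  classical
  set P : L → L → Prop := fun ℓ ℓ' => ∃ k k', mach ℓ' k' = mach ℓ k ∧
      lo ℓ' k' ≤ hi ℓ k ∧ hi ℓ k ≤ hi ℓ' k' with hP
  have hxx : ∀ ℓ ℓ' : L, 0 ≤ x ℓ * x ℓ' := fun ℓ ℓ' => mul_nonneg (hx0 ℓ) (hx0 ℓ')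
  have hite : ∀ (p : Prop) [Decidable p] (ℓ ℓ' : L),
      0 ≤ (if p then x ℓ * x ℓ' else 0) := by
    intro p _ ℓ ℓ'
    split
    · exact hxx ℓ ℓ'
    · exact le_rfl
  -- one-sided bound using capacity
  have hone : ∀ ℓ, ∑ ℓ', (if P ℓ ℓ' then x ℓ * x ℓ' else 0) ≤ 3 * x ℓ := by
    intro ℓ
    calc ∑ ℓ', (if P ℓ ℓ' then x ℓ * x ℓ' else 0)
        ≤ ∑ ℓ', ∑ k : Fin 3, (if (∃ k', mach ℓ' k' = mach ℓ k ∧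
            lo ℓ' k' ≤ hi ℓ k ∧ hi ℓ k ≤ hi ℓ' k') then x ℓ * x ℓ' else 0) := by
          refine Finset.sum_le_sum fun ℓ' _ => ?_
          by_cases h : P ℓ ℓ'
          · rw [if_pos h]
            obtain ⟨k, hk⟩ := h
            have h0 : x ℓ * x ℓ' = (fun k : Fin 3 => if (∃ k', mach ℓ' k' = mach ℓ k ∧
                lo ℓ' k' ≤ hi ℓ k ∧ hi ℓ k ≤ hi ℓ' k') then x ℓ * x ℓ' else 0) k := by
              simp only [if_pos hk]
            exact h0.trans_le (Finset.single_le_sum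
              (f := fun k : Fin 3 => if (∃ k', mach ℓ' k' = mach ℓ k ∧
                lo ℓ' k' ≤ hi ℓ k ∧ hi ℓ k ≤ hi ℓ' k') then x ℓ * x ℓ' else 0)
              (fun k _ => hite _ ℓ ℓ') (mem_univ k))
          · rw [if_neg h]
            exact Finset.sum_nonneg fun k _ => hite _ ℓ ℓ'
      _ = ∑ k : Fin 3, ∑ ℓ', (if (∃ k', mach ℓ' k' = mach ℓ k ∧
            lo ℓ' k' ≤ hi ℓ k ∧ hi ℓ k ≤ hi ℓ' k') then x ℓ * x ℓ' else 0) :=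
          Finset.sum_comm
      _ = ∑ k : Fin 3, x ℓ * ∑ ℓ' ∈ univ.filter (fun ℓ' => ∃ k',
            mach ℓ' k' = mach ℓ k ∧ lo ℓ' k' ≤ hi ℓ k ∧ hi ℓ k ≤ hi ℓ' k'), x ℓ' := by
          refine Finset.sum_congr rfl fun k _ => ?_
          rw [Finset.mul_sum, Finset.sum_filter]
      _ ≤ ∑ k : Fin 3, x ℓ * 1 :=
          Finset.sum_le_sum fun k _ =>
            mul_le_mul_of_nonneg_left (hcap ℓ k) (hx0 ℓ)
      _ = 3 * x ℓ := by simp [mul_comm]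
  -- the key dichotomy
  have hdich : ∀ ℓ ℓ' : L, SOverlap lo hi mach ℓ ℓ' → P ℓ ℓ' ∨ P ℓ' ℓ := by
    rintro ℓ ℓ' ⟨k, k', hm, hlo, hlo'⟩
    by_cases h : hi ℓ k ≤ hi ℓ' k'
    · exact Or.inl ⟨k, k', hm.symm, hlo', h⟩
    · exact Or.inr ⟨k', k, hm, hlo, (not_le.mp h).le⟩
  have hself : ∀ ℓ : L, P ℓ ℓ := fun ℓ => ⟨0, 0, rfl, hI ℓ 0, le_rfl⟩
  -- pointwise bound on each summand
  have hmain : ∀ ℓ, x ℓ * x ℓ +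
      ∑ ℓ' ∈ univ.filter (fun ℓ' => ℓ' ≠ ℓ ∧ SOverlap lo hi mach ℓ ℓ'), x ℓ * x ℓ'
      ≤ ∑ ℓ', ((if P ℓ ℓ' then x ℓ * x ℓ' else 0) +
               (if P ℓ' ℓ then x ℓ * x ℓ' else 0)) := by
    intro ℓ
    have heq : x ℓ * x ℓ +
        ∑ ℓ' ∈ univ.filter (fun ℓ' => ℓ' ≠ ℓ ∧ SOverlap lo hi mach ℓ ℓ'), x ℓ * x ℓ'
        = ∑ ℓ', ((if ℓ' = ℓ then x ℓ * x ℓ' else 0) +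
            (if (ℓ' ≠ ℓ ∧ SOverlap lo hi mach ℓ ℓ') then x ℓ * x ℓ' else 0)) := by
      rw [Finset.sum_add_distrib, Finset.sum_ite_eq' univ ℓ (fun ℓ' => x ℓ * x ℓ'),
        if_pos (mem_univ ℓ), ← Finset.sum_filter]
    rw [heq]
    refine Finset.sum_le_sum fun ℓ' _ => ?_
    by_cases h1 : ℓ' = ℓ
    · subst h1
      rw [if_pos rfl, if_neg (by simp), if_pos (hself ℓ'), add_zero]
      exact le_add_of_nonneg_right (hxx ℓ' ℓ')
    · rw [if_neg h1]
      by_cases h2 : SOverlap lo hi mach ℓ ℓ'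
      · rw [if_pos ⟨h1, h2⟩, zero_add]
        rcases hdich ℓ ℓ' h2 with h | h
        · rw [if_pos h]
          exact le_add_of_nonneg_right (hite _ ℓ ℓ')
        · rw [if_pos h]
          exact le_add_of_nonneg_left (hite _ ℓ ℓ')
      · rw [if_neg (fun hh => h2 hh.2), zero_add]
        exact add_nonneg (hite _ ℓ ℓ') (hite _ ℓ ℓ')
  calc ∑ ℓ, (x ℓ * x ℓ +
        ∑ ℓ' ∈ univ.filter (fun ℓ' => ℓ' ≠ ℓ ∧ SOverlap lo hi mach ℓ ℓ'), x ℓ * x ℓ')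
      ≤ ∑ ℓ, ∑ ℓ', ((if P ℓ ℓ' then x ℓ * x ℓ' else 0) +
          (if P ℓ' ℓ then x ℓ * x ℓ' else 0)) :=
        Finset.sum_le_sum fun ℓ _ => hmain ℓ
    _ = (∑ ℓ, ∑ ℓ', (if P ℓ ℓ' then x ℓ * x ℓ' else 0)) +
        (∑ ℓ, ∑ ℓ', (if P ℓ' ℓ then x ℓ * x ℓ' else 0)) := by
        rw [← Finset.sum_add_distrib]
        exact Finset.sum_congr rfl fun ℓ _ => Finset.sum_add_distrib
    _ = (∑ ℓ, ∑ ℓ', (if P ℓ ℓ' then x ℓ * x ℓ' else 0)) +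
        (∑ ℓ, ∑ ℓ', (if P ℓ ℓ' then x ℓ * x ℓ' else 0)) := by
        congr 1
        rw [Finset.sum_comm]
        exact Finset.sum_congr rfl fun ℓ _ => Finset.sum_congr rfl fun ℓ' _ => by
          rw [mul_comm]
    _ ≤ 3 * (∑ ℓ, x ℓ) + 3 * (∑ ℓ, x ℓ) := by
        have h3 : ∑ ℓ, ∑ ℓ', (if P ℓ ℓ' then x ℓ * x ℓ' else 0) ≤ 3 * ∑ ℓ, x ℓ := by
          rw [Finset.mul_sum]
          exact Finset.sum_le_sum fun ℓ _ => hone ℓ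
        exact add_le_add h3 h3
    _ = 6 * ∑ ℓ, x ℓ := by ring
end

section
/- Let I₁, ..., I_n be closed intervals on ℤ with demands c₁, ..., c_n ∈ (0, 1/2], processed in ascending order of start times; interval I_k is accepted if adding c_k to the total demand of previously accepted intervals containing st(I_k) keeps the total at most 1. Then at every time t, the total demand of accepted intervals containing t is at most 1. -/
open Finset

open scoped Classical in
/-- Feasibility of the greedy interval-selection: intervals sorted by start
time with demands in (0, 1/2], accepted iff the capacity check at the start
time passes; then the capacity 1 is respected at every time t. -/
theorem stmt_12 {n : ℕ} (lo hi : Fin n → ℤ) (c : Fin n → ℝ)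
    (hI : ∀ k, lo k ≤ hi k) (hc0 : ∀ k, 0 < c k) (hc : ∀ k, c k ≤ 1 / 2)
    (hsorted : Monotone lo) (Accepted : Finset (Fin n))
    (hgreedy : ∀ k, k ∈ Accepted ↔
      c k + ∑ j ∈ Accepted.filter
        (fun j => j < k ∧ lo j ≤ lo k ∧ lo k ≤ hi j), c j ≤ 1) :
    ∀ t : ℤ,
      ∑ k ∈ Accepted.filter (fun k => lo k ≤ t ∧ t ≤ hi k), c k ≤ 1 := by
  intro t
  set S := Accepted.filter (fun k => lo k ≤ t ∧ t ≤ hi k) with hS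
  rcases S.eq_empty_or_nonempty with h | h
  · rw [h]; simp
  · set m := S.max' h with hm
    have hmS : m ∈ S := S.max'_mem h
    have hmA : m ∈ Accepted := (Finset.mem_filter.mp hmS).1
    have hmt : lo m ≤ t ∧ t ≤ hi m := (Finset.mem_filter.mp hmS).2
    have hsub : S.erase m ⊆ Accepted.filter
        (fun j => j < m ∧ lo j ≤ lo m ∧ lo m ≤ hi j) := by
      intro j hj
      have hjm : j ≠ m := Finset.ne_of_mem_erase hj
      have hjS : j ∈ S := Finset.mem_of_mem_erase hj
      have hjA : j ∈ Accepted := (Finset.mem_filter.mp hjS).1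
      have hjt : lo j ≤ t ∧ t ≤ hi j := (Finset.mem_filter.mp hjS).2
      have hle : j ≤ m := S.le_max' j hjS
      have hlt : j < m := lt_of_le_of_ne hle hjm
      exact Finset.mem_filter.mpr ⟨hjA, hlt, hsorted hle,
        le_trans hmt.1 hjt.2⟩
    calc ∑ k ∈ S, c k = c m + ∑ k ∈ S.erase m, c k :=
          (Finset.add_sum_erase S c hmS).symm
      _ ≤ c m + ∑ j ∈ Accepted.filter
            (fun j => j < m ∧ lo j ≤ lo m ∧ lo m ≤ hi j), c j := by
          have := Finset.sum_le_sum_of_subset_of_nonneg hsub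
            (fun i _ _ => (hc0 i).le)
          linarith
      _ ≤ 1 := (hgreedy m).mp hmA
end
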